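/- arXiv:1512.02320 — 2 statements merged into one kernel-verified Lean document; each statement's English description precedes it below -/
import Mathlib

section
/- Let R be a commutative local ring and let I, J be ideals of R with I + J ≠ R. If u ∈ (R/I)^× and v ∈ (R/J)^× are units having the same image in (R/(I+J))^×, then there exists a unit w ∈ R^× whose images in R/I and R/J are u and v respectively. In other words, the sequence R^× → (R/I)^× × (R/J)^× → (R/(I+J))^× is exact at the middle term. -/
/-!
Lift `u` and `v` to elements `a, b` of `R`. Their difference lies in `I + J`, say `a - b = x + y`
with `x ∈ I`, `y ∈ J`, so `c = a - x` is congruent to `a` modulo `I` and to `b` modulo `J`.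
Since `I` lies in the maximal ideal, reduction modulo `I` is a local homomorphism, so `c` is a
unit of `R` because its image `u` is.
-/

namespace Ideal.Quotient

variable {R : Type*} [CommRing R]

theorem exists_mk_eq_and_mk_eq_of_mk_sup_eq {I J : Ideal R} {a b : R}
    (h : mk (I ⊔ J) a = mk (I ⊔ J) b) : ∃ c, mk I c = mk I a ∧ mk J c = mk J b := by
  obtain ⟨x, hx, y, hy, hxy⟩ := Submodule.mem_sup.mp (Ideal.Quotient.eq.mp h)
  refine ⟨a - x, Ideal.Quotient.eq.mpr ?_, Ideal.Quotient.eq.mpr ?_⟩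
  · simpa using neg_mem hx
  · rwa [show a - x - b = y by linear_combination -hxy]

theorem isLocalHom_mk [IsLocalRing R] {I : Ideal R} (hI : I ≠ ⊤) : IsLocalHom (mk I) :=
  have := Ideal.Quotient.nontrivial_iff.mpr hI
  IsLocalHom.of_surjective _ mk_surjective

end Ideal.Quotient

open Ideal.Quotient

/-- For a commutative local ring `R` and ideals `I, J` with `I + J ≠ R`, the
sequence `Rˣ → (R/I)ˣ × (R/J)ˣ → (R/(I+J))ˣ` is exact at the middle term. -/
theorem stmt_8 {R : Type*} [CommRing R] [IsLocalRing R]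
    (I J : Ideal R) (hIJ : I + J ≠ ⊤)
    (u : (R ⧸ I)ˣ) (v : (R ⧸ J)ˣ)
    (huv : Units.map (Ideal.Quotient.factor (S := I) (T := I + J) le_sup_left).toMonoidHom u
        = Units.map (Ideal.Quotient.factor (S := J) (T := I + J) le_sup_right).toMonoidHom v) :
    ∃ w : Rˣ,
      Units.map (Ideal.Quotient.mk I).toMonoidHom w = u ∧
      Units.map (Ideal.Quotient.mk J).toMonoidHom w = v := by
  obtain ⟨a, ha⟩ := mk_surjective (u : R ⧸ I)
  obtain ⟨b, hb⟩ := mk_surjective (v : R ⧸ J)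
  have hab : mk (I ⊔ J) a = mk (I ⊔ J) b := by
    simpa [← ha, ← hb, factor_mk] using congrArg Units.val huv
  obtain ⟨c, hcI, hcJ⟩ := exists_mk_eq_and_mk_eq_of_mk_sup_eq hab
  have := isLocalHom_mk (ne_top_of_le_ne_top hIJ le_sup_left)
  have hc : IsUnit c := isUnit_of_map_unit (mk I) c (by rw [hcI, ha]; exact u.isUnit)
  exact ⟨hc.unit, Units.ext (hcI.trans ha), Units.ext (hcJ.trans hb)⟩
end

section
/- A morphism of schemes that is faithfully flat (flat and surjective) is an epimorphism in the category of schemes. -/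
open AlgebraicGeometry

/-- A faithfully flat (flat on stalks and surjective) morphism of schemes is an
epimorphism in the category of schemes. -/
theorem stmt_14 {X Y : Scheme} (f : X ⟶ Y)
    (hflat : ∀ x : X, RingHom.Flat (f.stalkMap x).hom)
    (hsurj : Function.Surjective f.base) :
    CategoryTheory.Epi f :=
  have : Flat f := Flat.of_stalkMap f hflat
  have : Surjective f := ⟨hsurj⟩
  Flat.epi_of_flat_of_surjective f
end
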